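/- arXiv:1702.04482 — 2 statements merged into one kernel-verified Lean document; each statement's English description precedes it below -/
import Mathlib

section
/- Let p : ℝ → ℝ be a function with closed graph and n a nonnegative integer or ∞ with p ∉ Cⁿ(ℝ,ℝ). Then 𝒜_p = {f ∈ Cⁿ(ℝ,ℝ) : f(p(·)+c) ∈ Cⁿ(ℝ,ℝ) for all c ∈ ℝ} consists exactly of the constant functions. -/
/-!
If `f` is not constant but every `f (p · + c)` is continuous, then `p` is continuous. Otherwise the
set `D` of discontinuities of `p` is closed and nonempty, and by Baire's theorem `p` is bounded on
`D` near some `x₀ ∈ D`, while it is unbounded near `x₀`. Following a large value `p x` back to the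
last point `a` of `D` before `x`, continuity of `p` on `(a, x]` and the closed graph show that `p`
sweeps out a half-line on every neighbourhood of `x₀` or of `a`. Continuity of `f (p · + c)` at
that point then gives `f (t + c) → f (p x + c)` as `t → ±∞` for every `c`, so `f` is constant.
Once `p` is continuous, the inverse function theorem at a point where `f' ≠ 0` writes `p + c`
locally as `f⁻¹ ∘ f (p · + c)`, so `p` is `Cⁿ`.
-/

open Filter Topology Set

section ClosedGraph

variable {X Y : Type*} [TopologicalSpace X] [TopologicalSpace Y] {p : X → Y}

theorem eq_of_mapClusterPt_of_isClosed_graph (hgraph : IsClosed {q : X × Y | q.2 = p q.1})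
    {l : Filter X} {x : X} {y : Y} (hl : l ≤ 𝓝 x) (hy : MapClusterPt y l p) : y = p x := by
  by_contra hne
  obtain ⟨U, hU, V, hV, hUV⟩ := mem_nhds_prod_iff.mp (hgraph.isOpen_compl.mem_nhds hne)
  obtain ⟨z, hzV, hzU⟩ := ((hy.frequently hV).and_eventually (hl hU)).exists
  exact hUV (mk_mem_prod hzU hzV) rfl

theorem mem_of_eventually_mem_of_isClosed_graph (hgraph : IsClosed {q : X × Y | q.2 = p q.1})
    {l : Filter X} [l.NeBot] {x : X} (hl : l ≤ 𝓝 x) {K : Set Y} (hK : IsCompact K)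
    (hpK : ∀ᶠ z in l, p z ∈ K) : p x ∈ K := by
  obtain ⟨y, hyK, hy⟩ := hK (tendsto_principal.mpr hpK)
  rwa [← eq_of_mapClusterPt_of_isClosed_graph hgraph hl hy]

theorem isClosed_preimage_of_isClosed_graph (hgraph : IsClosed {q : X × Y | q.2 = p q.1})
    {K : Set Y} (hK : IsCompact K) : IsClosed (p ⁻¹' K) :=
  isClosed_of_closure_subset fun x hx =>
    have : (𝓝[p ⁻¹' K] x).NeBot := mem_closure_iff_nhdsWithin_neBot.mp hx
    mem_of_eventually_mem_of_isClosed_graph hgraph (l := 𝓝[p ⁻¹' K] x) nhdsWithin_le_nhds hK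
      self_mem_nhdsWithin

theorem continuousAt_of_isClosed_graph (hgraph : IsClosed {q : X × Y | q.2 = p q.1})
    {x : X} {K : Set Y} (hK : IsCompact K) (hpK : ∀ᶠ z in 𝓝 x, p z ∈ K) : ContinuousAt p x :=
  hK.tendsto_nhds_of_unique_mapClusterPt hpK fun _ _ hy =>
    eq_of_mapClusterPt_of_isClosed_graph hgraph le_rfl hy

theorem isOpen_setOf_continuousAt_of_isClosed_graph [WeaklyLocallyCompactSpace Y]
    (hgraph : IsClosed {q : X × Y | q.2 = p q.1}) : IsOpen {x | ContinuousAt p x} := by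
  refine isOpen_iff_mem_nhds.mpr fun x hx => ?_
  obtain ⟨K, hK, hKx⟩ := exists_compact_mem_nhds (p x)
  filter_upwards [eventually_eventually_nhds.mpr (hx hKx)] with z hz
  exact continuousAt_of_isClosed_graph hgraph hK hz

end ClosedGraph

section OrderedCodomain

variable {X β : Type*} [TopologicalSpace X] [LinearOrder β] [TopologicalSpace β]
  [CompactIccSpace β] {p : X → β}

theorem continuousAt_of_isBoundedUnder (hgraph : IsClosed {q : X × β | q.2 = p q.1}) {x : X}
    (hle : IsBoundedUnder (· ≤ ·) (𝓝 x) p) (hge : IsBoundedUnder (· ≥ ·) (𝓝 x) p) :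
    ContinuousAt p x := by
  obtain ⟨M, hM⟩ := hle
  obtain ⟨m, hm⟩ := hge
  exact continuousAt_of_isClosed_graph hgraph isCompact_Icc (hm.and hM)

theorem tendsto_atTop_of_isClosed_graph (hgraph : IsClosed {q : X × β | q.2 = p q.1})
    {l : Filter X} {a : X} (hl : l ≤ 𝓝 a) {t : β} (hpa : p a < t) (ht : ∀ᶠ y in l, t ≤ p y) :
    Tendsto p l atTop := by
  refine tendsto_atTop.mpr fun K => ?_
  by_contra hK
  have : (l ⊓ 𝓟 {y | ¬ K ≤ p y}).NeBot := frequently_iff_neBot.mp (not_eventually.mp hK)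
  have hmem : ∀ᶠ y in l ⊓ 𝓟 {y | ¬ K ≤ p y}, p y ∈ Icc t K :=
    (ht.filter_mono inf_le_left).and (le_principal_iff.mp inf_le_right) |>.mono
      fun y hy => ⟨hy.1, le_of_not_ge hy.2⟩
  exact hpa.not_ge
    (mem_of_eventually_mem_of_isClosed_graph hgraph (inf_le_left.trans hl) isCompact_Icc hmem).1

end OrderedCodomain

theorem isBoundedUnder_nhds_of_nhdsLE_nhdsGE {α β : Type*} [LinearOrder α] [TopologicalSpace α]
    [OrderTopology α] [Preorder β] [IsDirected β (· ≤ ·)] {p : α → β} {x : α}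
    (hl : IsBoundedUnder (· ≤ ·) (𝓝[≤] x) p) (hr : IsBoundedUnder (· ≤ ·) (𝓝[≥] x) p) :
    IsBoundedUnder (· ≤ ·) (𝓝 x) p := by
  rw [← nhdsLE_sup_nhdsGE, IsBoundedUnder, map_sup]
  exact isBounded_sup hl hr

theorem IsClosed.exists_mem_eventually_mem_of_subset_iUnion {X : Type*} [PseudoEMetricSpace X]
    [CompleteSpace X] {D : Set X} (hD : IsClosed D) (hne : D.Nonempty) {F : ℕ → Set X}
    (hF : ∀ i, IsClosed (F i)) (hcover : D ⊆ ⋃ i, F i) :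
    ∃ i, ∃ x ∈ D, ∀ᶠ z in 𝓝 x, z ∈ D → z ∈ F i := by
  have := hD.completeSpace_coe
  have := hne.to_subtype
  obtain ⟨i, x, hx⟩ := nonempty_interior_of_iUnion_of_closed
    (fun i => (hF i).preimage (continuous_subtype_val (p := (· ∈ D))))
    (eq_univ_of_forall fun z => by simpa using hcover z.2)
  obtain ⟨U, hU, hUF⟩ := (mem_nhds_subtype D x _).mp (mem_interior_iff_mem_nhds.mp hx)
  exact ⟨i, x, x.2, mem_of_superset hU fun z hz hzD => hUF (show (⟨z, hzD⟩ : D).1 ∈ U from hz)⟩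

section OrderedDomain

variable {α β : Type*} [ConditionallyCompleteLinearOrder α] [TopologicalSpace α] [OrderTopology α]
  [LinearOrder β] [TopologicalSpace β] [OrderTopology β] {p : α → β}

theorem IsClosed.exists_Ioc_subset_compl {D : Set α} (hD : IsClosed D) {x₀ x : α}
    (hx₀ : x₀ ∈ D) (hx : x ∉ D) (hle : x₀ ≤ x) : ∃ a ∈ D, x₀ ≤ a ∧ a < x ∧ Ioc a x ⊆ Dᶜ := by
  have hmem := (hD.inter isClosed_Icc).csSup_mem ⟨x₀, hx₀, left_mem_Icc.2 hle⟩
    (bddAbove_Icc.mono inter_subset_right)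
  refine ⟨_, hmem.1, hmem.2.1, hmem.2.2.lt_of_ne fun h => hx (h ▸ hmem.1), fun y hy hyD => ?_⟩
  exact hy.1.not_ge (le_csSup (bddAbove_Icc.mono inter_subset_right)
    ⟨hyD, hmem.2.1.trans hy.1.le, hy.2⟩)

variable [DenselyOrdered α] [NoMaxOrder α]

theorem atTop_le_map_nhds_of_tendsto_nhdsGT {a b : α} (hab : a < b)
    (hcont : ContinuousOn p (Ioc a b)) (htop : Tendsto p (𝓝[>] a) atTop) :
    atTop ≤ map p (𝓝 a) := by
  intro W hW
  obtain ⟨s, has, hsW⟩ := exists_Ico_subset_of_mem_nhds hW ⟨b, hab⟩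
  obtain ⟨c, hac, hcs⟩ := exists_between (lt_min has hab)
  have hIci : Ici (p c) ⊆ p '' Ioc a c :=
    isPreconnected_Ioc.intermediate_value_Ici (right_mem_Ioc.2 hac)
      (le_principal_iff.mpr (Ioc_mem_nhdsGT hac))
      (hcont.mono (Ioc_subset_Ioc_right (hcs.le.trans (min_le_right _ _)))) htop
  refine mem_of_superset (Ici_mem_atTop (p c)) fun u hu => ?_
  obtain ⟨y, hy, rfl⟩ := hIci hu
  exact hsW ⟨hy.1.le, hy.2.trans_lt (hcs.trans_le (min_le_left _ _))⟩

variable [CompactIccSpace β]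

theorem atTop_le_map_nhds_or_Icc_subset_image (hgraph : IsClosed {q : α × β | q.2 = p q.1})
    {a x : α} (hax : a < x) (hcont : ContinuousOn p (Ioc a x)) {t : β} (hpa : p a < t) :
    atTop ≤ map p (𝓝 a) ∨ Icc t (p x) ⊆ p '' Ioc a x := by
  by_cases h : ∃ y ∈ Ioc a x, p y < t
  · obtain ⟨y, hy, hyt⟩ := h
    exact Or.inr ((Icc_subset_Icc_left hyt.le).trans
      (isPreconnected_Ioc.intermediate_value hy (right_mem_Ioc.2 hax) hcont))
  · push Not at h
    exact Or.inl (atTop_le_map_nhds_of_tendsto_nhdsGT hax hcont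
      (tendsto_atTop_of_isClosed_graph hgraph nhdsWithin_le_nhds hpa
        (mem_of_superset (Ioc_mem_nhdsGT hax) h)))

theorem exists_atTop_le_map_nhds_of_not_isBoundedUnder
    (hgraph : IsClosed {q : α × β | q.2 = p q.1}) {D : Set α} (hD : IsClosed D)
    (hcont : ∀ x ∉ D, ContinuousAt p x) {x₀ : α} {m : β} (hx₀ : x₀ ∈ D)
    (hm : ∀ᶠ z in 𝓝 x₀, z ∈ D → p z ≤ m) (hunb : ¬ IsBoundedUnder (· ≤ ·) (𝓝[≥] x₀) p) :
    ∃ a, atTop ≤ map p (𝓝 a) := by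
  by_contra! hno
  have hfreq : ∀ M, ∃ᶠ z in 𝓝[≥] x₀, M < p z := by
    simpa [IsBoundedUnder, IsBounded, not_eventually] using hunb
  obtain ⟨t, hmt⟩ : ∃ t, m < t := let ⟨z, hz⟩ := (hfreq m).exists; ⟨p z, hz⟩
  obtain ⟨b, hx₀b, hb⟩ := exists_Ico_subset_of_mem_nhds hm (exists_gt x₀)
  have hrange : ∀ x ∈ Ico x₀ b, t ≤ p x → Icc t (p x) ⊆ p '' Ioc x₀ x := by
    intro x hx htx
    have hxD : x ∉ D := fun hxD => (hb hx hxD).not_gt (hmt.trans_le htx)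
    obtain ⟨a, haD, hx₀a, hax, hIoc⟩ := hD.exists_Ioc_subset_compl hx₀ hxD hx.1
    have hpa : p a < t := (hb ⟨hx₀a, hax.trans hx.2⟩ haD).trans_lt hmt
    have hcontOn : ContinuousOn p (Ioc a x) := fun y hy => (hcont y (hIoc hy)).continuousWithinAt
    refine (atTop_le_map_nhds_or_Icc_subset_image hgraph hax hcontOn hpa).resolve_left
      (hno a) |>.trans (image_mono (Ioc_subset_Ioc_left hx₀a))
  refine hno x₀ fun W hW => mem_of_superset (Ici_mem_atTop t) fun u hu => ?_
  obtain ⟨s, hs, hsW⟩ := exists_Ico_subset_of_mem_nhds hW (exists_gt x₀)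
  obtain ⟨x, hux, hx⟩ := ((hfreq u).and_eventually (Ico_mem_nhdsGE (lt_min hs hx₀b))).exists
  obtain ⟨y, hy, rfl⟩ := hrange x ⟨hx.1, hx.2.trans_le (min_le_right _ _)⟩
    (le_trans hu hux.le) ⟨hu, hux.le⟩
  exact hsW ⟨hy.1.le, hy.2.trans_lt (hx.2.trans_le (min_le_left _ _))⟩

end OrderedDomain

theorem exists_atTop_or_atBot_le_map_nhds {p : ℝ → ℝ}
    (hgraph : IsClosed {q : ℝ × ℝ | q.2 = p q.1}) (hp : ¬ Continuous p) :
    ∃ x, atTop ≤ map p (𝓝 x) ∨ atBot ≤ map p (𝓝 x) := by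
  set D := {x | ContinuousAt p x}ᶜ
  have hD : IsClosed D := (isOpen_setOf_continuousAt_of_isClosed_graph hgraph).isClosed_compl
  have hcont : ∀ x ∉ D, ContinuousAt p x := fun x hx => not_not.mp hx
  have hne : D.Nonempty := by
    simpa [D, continuous_iff_continuousAt, Set.Nonempty] using hp
  obtain ⟨M, x₀, hx₀, hM⟩ := hD.exists_mem_eventually_mem_of_subset_iUnion hne
    (F := fun M : ℕ => p ⁻¹' Icc (-M) M)
    (fun M => isClosed_preimage_of_isClosed_graph hgraph isCompact_Icc)
    (fun x _ => mem_iUnion.mpr ⟨⌈|p x|⌉₊, abs_le.mp (Nat.le_ceil _)⟩)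
  have hup : ∀ᶠ z in 𝓝 x₀, z ∈ D → p z ≤ M := hM.mono fun z h hz => (h hz).2
  have hlow : ∀ᶠ z in 𝓝 x₀, z ∈ D → -(M : ℝ) ≤ p z := hM.mono fun z h hz => (h hz).1
  have hunb : ¬ (IsBoundedUnder (· ≤ ·) (𝓝[≥] x₀) p ∧ IsBoundedUnder (· ≥ ·) (𝓝[≥] x₀) p ∧
      IsBoundedUnder (· ≤ ·) (𝓝[≤] x₀) p ∧ IsBoundedUnder (· ≥ ·) (𝓝[≤] x₀) p) :=
    fun ⟨h₁, h₂, h₃, h₄⟩ => hx₀ (continuousAt_of_isBoundedUnder hgraph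
      (isBoundedUnder_nhds_of_nhdsLE_nhdsGE h₃ h₁)
      (isBoundedUnder_nhds_of_nhdsLE_nhdsGE (β := ℝᵒᵈ) h₄ h₂))
  simp only [not_and_or] at hunb
  -- the four one-sided cases are one lemma, read in `ℝ` or `ℝᵒᵈ` on either side
  rcases hunb with h | h | h | h
  · obtain ⟨a, ha⟩ := exists_atTop_le_map_nhds_of_not_isBoundedUnder hgraph hD hcont hx₀ hup h
    exact ⟨a, Or.inl ha⟩
  · obtain ⟨a, ha⟩ := exists_atTop_le_map_nhds_of_not_isBoundedUnder (β := ℝᵒᵈ) hgraph hD hcont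
      hx₀ hlow h
    exact ⟨a, Or.inr ha⟩
  · obtain ⟨a, ha⟩ := exists_atTop_le_map_nhds_of_not_isBoundedUnder (α := ℝᵒᵈ) hgraph hD hcont
      hx₀ hup h
    exact ⟨a, Or.inl ha⟩
  · obtain ⟨a, ha⟩ := exists_atTop_le_map_nhds_of_not_isBoundedUnder (α := ℝᵒᵈ) (β := ℝᵒᵈ)
      hgraph hD hcont hx₀ hlow h
    exact ⟨a, Or.inr ha⟩

theorem eq_of_forall_tendsto_comp_add {G Y : Type*} [AddCommGroup G] [TopologicalSpace Y]
    [T2Space Y] {f : G → Y} {l : Filter G} [l.NeBot] (hl : ∀ c, Tendsto (· + c) l l) {a : G}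
    (h : ∀ c, Tendsto (fun t => f (t + c)) l (𝓝 (f (a + c)))) (y : G) : f y = f a := by
  have hshift := (h 0).comp (hl (y - a))
  simp only [Function.comp_def, add_zero] at hshift
  simpa using tendsto_nhds_unique (h (y - a)) hshift

theorem continuous_of_isClosed_graph_of_continuous_comp_add {p f : ℝ → ℝ}
    (hgraph : IsClosed {q : ℝ × ℝ | q.2 = p q.1}) (hf : ∀ c, Continuous fun x => f (p x + c))
    (hnc : ∀ k, f ≠ fun _ => k) : Continuous p := by
  by_contra hp
  obtain ⟨x, hx⟩ := exists_atTop_or_atBot_le_map_nhds hgraph hp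
  have hlim : ∀ l ≤ map p (𝓝 x), ∀ c, Tendsto (fun t => f (t + c)) l (𝓝 (f (p x + c))) :=
    fun l hl c => (tendsto_map'_iff (f := fun t => f (t + c)).mpr ((hf c).tendsto x)).mono_left hl
  refine hnc (f (p x)) (funext fun y => ?_)
  rcases hx with hx | hx
  · exact eq_of_forall_tendsto_comp_add (fun c => tendsto_atTop_add_const_right _ c tendsto_id)
      (hlim _ hx) y
  · exact eq_of_forall_tendsto_comp_add (fun c => tendsto_atBot_add_const_right _ c tendsto_id)
      (hlim _ hx) y

theorem contDiffAt_of_contDiffAt_comp {𝕂 E F G : Type*} [RCLike 𝕂] [NormedAddCommGroup E]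
    [NormedSpace 𝕂 E] [CompleteSpace E] [NormedAddCommGroup F] [NormedSpace 𝕂 F]
    [NormedAddCommGroup G] [NormedSpace 𝕂 G] {n : WithTop ℕ∞} {f : E → F} {f' : E ≃L[𝕂] F}
    {g : G → E} {x : G} (hf : ContDiffAt 𝕂 n f (g x)) (hf' : HasFDerivAt f (f' : E →L[𝕂] F) (g x))
    (hn : n ≠ 0) (hg : ContinuousAt g x) (hfg : ContDiffAt 𝕂 n (f ∘ g) x) : ContDiffAt 𝕂 n g x := by
  have hinv : ∀ᶠ y in 𝓝 x, hf.localInverse hf' hn (f (g y)) = g y :=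
    hg.eventually (hf.hasStrictFDerivAt' hf' hn).eventually_left_inverse
  exact ((hf.to_localInverse hf' hn).comp x hfg).congr_of_eventuallyEq
    (hinv.mono fun y hy => hy.symm)

theorem contDiff_of_contDiff_comp_add {n : WithTop ℕ∞} {p f : ℝ → ℝ} (hp : Continuous p)
    (hf : ContDiff ℝ n f) (hfc : ∀ c, ContDiff ℝ n fun x => f (p x + c)) (hn : n ≠ 0)
    (hnc : ∀ k, f ≠ fun _ => k) : ContDiff ℝ n p := by
  obtain ⟨z, hz⟩ : ∃ z, deriv f z ≠ 0 := by
    by_contra! h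
    exact hnc (f 0) (funext fun y => is_const_of_deriv_eq_zero (hf.differentiable hn) h y 0)
  refine contDiff_iff_contDiffAt.mpr fun x => ?_
  obtain ⟨c, rfl⟩ : ∃ c, p x + c = z := ⟨z - p x, add_sub_cancel _ _⟩
  have hshift := contDiffAt_of_contDiffAt_comp (g := fun y => p y + c) hf.contDiffAt
    ((hf.differentiable hn _).hasDerivAt.hasFDerivAt_equiv hz) hn
    (hp.continuousAt.add continuousAt_const) (hfc c).contDiffAt
  simpa using hshift.sub (contDiffAt_const (c := c))

theorem stmt_18 (n : ℕ∞) (p : ℝ → ℝ)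
    (hgraph : IsClosed {q : ℝ × ℝ | q.2 = p q.1}) (hp : ¬ ContDiff ℝ n p)
    (A : Set (ℝ → ℝ))
    (hA : A = {f | ContDiff ℝ n f ∧ ∀ c : ℝ, ContDiff ℝ n fun x => f (p x + c)}) :
    A = {f | ∃ k : ℝ, f = fun _ => k} := by
  subst hA
  ext f
  refine ⟨fun ⟨hf, hfc⟩ => ?_, ?_⟩
  · show ∃ k, f = fun _ => k
    by_contra! hnc
    have hpc := continuous_of_isClosed_graph_of_continuous_comp_add hgraph
      (fun c => (hfc c).continuous) hnc
    rcases eq_or_ne n 0 with rfl | hn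
    · exact hp (contDiff_zero.mpr hpc)
    · exact hp (contDiff_of_contDiff_comp_add hpc hf hfc (by exact_mod_cast hn) hnc)
  · rintro ⟨k, rfl⟩
    exact ⟨contDiff_const, fun _ => contDiff_const⟩
end

section
/- Let p : ℝ → ℝ be a function whose graph is not closed in ℝ², and n a nonnegative integer or ∞ with p ∉ Cⁿ(ℝ,ℝ). Then 𝒜_p = {f ∈ Cⁿ(ℝ,ℝ) : f(p(·)+c) ∈ Cⁿ(ℝ,ℝ) for all c ∈ ℝ} is either the constant functions or equal to the set of d-periodic Cⁿ functions for some d ≠ 0. -/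
/-!
A limit point `(x₀, L)` of the graph lying off it makes `L - p x₀ ≠ 0` a period of every
`f ∈ 𝒜_p`: let `x → x₀` in `f (p x + c)`. The common periods of `𝒜_p` form a closed subgroup
of `ℝ`, so either `𝒜_p` consists of constants or its common periods are `aℤ` with `a > 0`.
In the latter case the same limit argument in the compact circle `ℝ/aℤ` shows that `p` is
continuous modulo `a`, so for `a`-periodic `g` we have `g (p x + c) = g (y + c)` with `y` a lift
of `p x` close to `p x₁`. This gives continuity; for `n ≥ 1`, a nonconstant `h ∈ 𝒜_p` has a `Cⁿ`
local inverse `ψ` near a point `t₀` where `h' t₀ ≠ 0`, and `ψ (h (p x + t₀ - p x₁))` recovers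
that lift, shifted by `t₀ - p x₁`, as a `Cⁿ` function of `x`.
-/

open Function Filter Topology Set AddSubgroup

theorem MapClusterPt.eq_of_tendsto {X Y : Type*} [TopologicalSpace Y] [T2Space Y]
    {l : Filter X} {u : X → Y} {y z : Y} (hz : MapClusterPt z l u) (hu : Tendsto u l (𝓝 y)) :
    z = y :=
  eq_of_nhds_neBot (hz.neBot.mono (inf_le_inf_left _ hu))

theorem periodic_sub_of_mapClusterPt {X G Z : Type*} [TopologicalSpace X] [AddCommGroup G]
    [TopologicalSpace G] [ContinuousAdd G] [TopologicalSpace Z] [T2Space Z]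
    {P : X → G} {x₀ : X} {β : G} (hβ : MapClusterPt β (𝓝 x₀) P) {F : G → Z}
    (hF : Continuous F) (hFP : ∀ c, ContinuousAt (fun x => F (P x + c)) x₀) :
    Periodic F (β - P x₀) := by
  intro y
  set c := y - P x₀
  have hcluster : MapClusterPt (F (β + c)) (𝓝 x₀) (fun x => F (P x + c)) :=
    hβ.continuousAt_comp (f := fun g => F (g + c)) (hF.comp (continuous_add_const c)).continuousAt
  convert hcluster.eq_of_tendsto (hFP c) using 2 <;> simp only [c] <;> abel

theorem exists_mapClusterPt_ne_of_not_isClosed_graph {X Y : Type*} [TopologicalSpace X]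
    [TopologicalSpace Y] {p : X → Y} (hp : ¬ IsClosed {q : X × Y | q.2 = p q.1}) :
    ∃ x₀ y, y ≠ p x₀ ∧ MapClusterPt y (𝓝 x₀) p := by
  obtain ⟨⟨x₀, y⟩, hclosure, hne⟩ := not_subset.1 (mt isClosed_of_closure_subset hp)
  refine ⟨x₀, y, hne, mapClusterPt_iff_frequently.2 fun s hs => frequently_iff.2 fun hU => ?_⟩
  obtain ⟨⟨x, _⟩, ⟨hxU, hxs⟩, hgraph⟩ :=
    mem_closure_iff_nhds.1 hclosure _ (prod_mem_nhds hU hs)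
  exact ⟨x, hxU, hgraph ▸ hxs⟩

theorem AddSubgroup.exists_pos_eq_zmultiples_of_isClosed {S : AddSubgroup ℝ}
    (hS : IsClosed (S : Set ℝ)) (hbot : S ≠ ⊥) (htop : S ≠ ⊤) :
    ∃ a, 0 < a ∧ S = zmultiples a := by
  rcases S.dense_or_cyclic with hdense | ⟨a, rfl⟩
  · exact absurd (coe_eq_univ.1 (hS.closure_eq ▸ hdense.closure_eq)) htop
  · rw [← zmultiples_eq_closure] at hbot ⊢
    have ha : a ≠ 0 := by
      rintro rfl
      exact hbot zmultiples_zero_eq_bot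
    rcases ha.lt_or_gt with ha | ha
    · exact ⟨-a, neg_pos.2 ha, (zmultiples_neg (g := a)).symm⟩
    · exact ⟨a, ha, rfl⟩

theorem eventually_exists_coe_eq_mem {X G : Type*} [TopologicalSpace X] [AddGroup G]
    [TopologicalSpace G] [IsTopologicalAddGroup G] {N : AddSubgroup G} {p : X → G} {x₀ : X}
    (hp : ContinuousAt (fun x => (p x : G ⧸ N)) x₀) {U : Set G} (hU : U ∈ 𝓝 (p x₀)) :
    ∀ᶠ x in 𝓝 x₀, ∃ y ∈ U, (y : G ⧸ N) = p x :=
  hp (QuotientAddGroup.isOpenMap_coe.image_mem_nhds hU)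

section Periods

variable {α β : Type*} [AddGroup α]

def commonPeriods (A : Set (α → β)) : AddSubgroup α where
  carrier := {d | ∀ f ∈ A, Periodic f d}
  zero_mem' _ _ x := by rw [add_zero]
  add_mem' hb hc f hf := (hb f hf).add_period (hc f hf)
  neg_mem' hb f hf := (hb f hf).neg

theorem mem_commonPeriods {A : Set (α → β)} {d : α} :
    d ∈ commonPeriods A ↔ ∀ f ∈ A, Periodic f d := Iff.rfl

theorem isClosed_commonPeriods [TopologicalSpace α] [ContinuousAdd α] [TopologicalSpace β]
    [T2Space β] {A : Set (α → β)} (hA : ∀ f ∈ A, Continuous f) :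
    IsClosed (commonPeriods A : Set α) := by
  have : (commonPeriods A : Set α) = ⋂ f ∈ A, ⋂ x, {d | f (x + d) = f x} := by
    ext
    simp [mem_commonPeriods, Periodic]
  rw [this]
  exact isClosed_biInter fun f hf => isClosed_iInter fun x =>
    isClosed_eq ((hA f hf).comp (continuous_const_add x)) continuous_const

theorem Function.Periodic.continuous_lift [TopologicalSpace α] [TopologicalSpace β]
    {f : α → β} {a : α} (hf : Periodic f a) (hcont : Continuous f) : Continuous hf.lift :=
  hcont.quotient_liftOn' _

theorem Function.Periodic.eq_of_coe_eq {f : α → β} {a : α} (hf : Periodic f a) {y z : α}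
    (h : (y : α ⧸ zmultiples a) = z) : f y = f z := by
  rw [← hf.lift_coe, h, hf.lift_coe]

end Periods

theorem Function.Periodic.of_periodic_lift {α β : Type*} [AddCommGroup α] {f : α → β} {a : α}
    (hf : Periodic f a) {d : α} (hd : Periodic hf.lift (d : α ⧸ zmultiples a)) :
    Periodic f d := fun y => by
  simpa only [← QuotientAddGroup.mk_add, hf.lift_coe] using hd y

theorem exists_pos_commonPeriods_eq_zmultiples {A : Set (ℝ → ℝ)} (hA : ∀ f ∈ A, Continuous f)
    {d : ℝ} (hd : d ≠ 0) (hdA : d ∈ commonPeriods A) {h : ℝ → ℝ} (hhA : h ∈ A)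
    (hnc : ∀ k, h ≠ fun _ => k) : ∃ a, 0 < a ∧ commonPeriods A = zmultiples a := by
  refine exists_pos_eq_zmultiples_of_isClosed (isClosed_commonPeriods hA) ?_ ?_
  · rintro hbot
    exact hd (mem_bot.1 (hbot ▸ hdA))
  · rintro htop
    refine hnc (h 0) (funext fun x => ?_)
    simpa using mem_commonPeriods.1 (htop ▸ mem_top x) h hhA 0

theorem continuous_coe_comp_of_commonPeriods_eq {p : ℝ → ℝ} {A : Set (ℝ → ℝ)} {a : ℝ}
    [Fact (0 < a)] (hA : ∀ f ∈ A, Continuous f ∧ ∀ c, Continuous fun x => f (p x + c))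
    (hperiods : commonPeriods A = zmultiples a) :
    Continuous fun x => (p x : AddCircle a) := by
  refine continuous_iff_continuousAt.2 fun x₀ => tendsto_nhds_of_unique_mapClusterPt ?_
  rintro ⟨b⟩ hb
  have hperiodic (f) (hf : f ∈ A) : Periodic f a :=
    mem_commonPeriods.1 (hperiods ▸ mem_zmultiples a) f hf
  suffices b - p x₀ ∈ commonPeriods A by
    rw [hperiods] at this
    exact (QuotientAddGroup.eq_iff_sub_mem.2 this :)
  intro f hf
  refine (hperiodic f hf).of_periodic_lift (periodic_sub_of_mapClusterPt hb
    ((hperiodic f hf).continuous_lift (hA f hf).1) fun c => ?_)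
  induction c using QuotientAddGroup.induction_on with | H c => ?_
  simpa only [← QuotientAddGroup.mk_add, (hperiodic f hf).lift_coe] using
    ((hA f hf).2 c).continuousAt

theorem ContDiffAt.exists_leftInverse {n : WithTop ℕ∞} {h : ℝ → ℝ} {t₀ : ℝ}
    (hh : ContDiffAt ℝ n h t₀) (hn : n ≠ 0) (ht₀ : deriv h t₀ ≠ 0) :
    ∃ ψ : ℝ → ℝ, ContDiffAt ℝ n ψ (h t₀) ∧ ∀ᶠ t in 𝓝 t₀, ψ (h t) = t := by
  have hder := (hh.differentiableAt hn).hasDerivAt.hasFDerivAt_equiv ht₀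
  exact ⟨_, hh.to_localInverse hder hn, (hh.hasStrictFDerivAt' hder hn).eventually_left_inverse⟩

theorem Function.Periodic.continuous_comp_add {p : ℝ → ℝ} {a : ℝ}
    (hP : Continuous fun x => (p x : AddCircle a)) {g : ℝ → ℝ} (hga : Periodic g a)
    (hg : Continuous g) (c : ℝ) : Continuous fun x => g (p x + c) := by
  have hlift := (hga.continuous_lift hg).comp (hP.add (continuous_const (y := (c : AddCircle a))))
  simpa only [comp_def, Pi.add_apply, ← QuotientAddGroup.mk_add, hga.lift_coe] using hlift

theorem Function.Periodic.contDiff_comp_add {n : WithTop ℕ∞} (hn : n ≠ 0) {p : ℝ → ℝ} {a : ℝ}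
    (hP : Continuous fun x => (p x : AddCircle a)) {g : ℝ → ℝ} (hga : Periodic g a)
    (hg : ContDiff ℝ n g) {h : ℝ → ℝ} (hha : Periodic h a) (hh : ContDiff ℝ n h)
    (hhp : ∀ c, ContDiff ℝ n fun x => h (p x + c)) (hnc : ∀ k, h ≠ fun _ => k) (c : ℝ) :
    ContDiff ℝ n fun x => g (p x + c) := by
  obtain ⟨t₀, ht₀⟩ : ∃ t, deriv h t ≠ 0 := by
    by_contra! hzero
    exact hnc (h 0) (funext fun x => is_const_of_deriv_eq_zero (hh.differentiable hn) hzero x 0)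
  refine contDiff_iff_contDiffAt.2 fun x₁ => ?_
  obtain ⟨ψ, hψ, hψh⟩ := hh.contDiffAt.exists_leftInverse hn ht₀
  set c₀ := t₀ - p x₁
  have hc₀ : p x₁ + c₀ = t₀ := add_sub_cancel _ _
  have hU : {y | ψ (h (y + c₀)) = y + c₀} ∈ 𝓝 (p x₁) :=
    ((continuous_add_const c₀).tendsto' _ _ hc₀).eventually hψh
  have hψhp : ContDiffAt ℝ n (fun x => ψ (h (p x + c₀))) x₁ :=
    (hc₀ ▸ hψ).comp x₁ (hhp c₀).contDiffAt
  have hlocal : ContDiffAt ℝ n (fun x => g (ψ (h (p x + c₀)) - c₀ + c)) x₁ :=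
    hg.contDiffAt.comp x₁ ((hψhp.sub contDiffAt_const).add contDiffAt_const)
  refine hlocal.congr_of_eventuallyEq ?_
  filter_upwards [eventually_exists_coe_eq_mem hP.continuousAt hU] with x ⟨y, hyU, hyx⟩
  have hshift (c) : ((y + c : ℝ) : AddCircle a) = (p x + c : ℝ) := by
    rw [QuotientAddGroup.mk_add, hyx]
    rfl
  rw [← hha.eq_of_coe_eq (hshift c₀), hyU, add_sub_cancel_right]
  exact (hga.eq_of_coe_eq (hshift c)).symm

theorem stmt_19_general (n : ℕ∞) (p : ℝ → ℝ)
    (hgraph : ¬ IsClosed {q : ℝ × ℝ | q.2 = p q.1})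
    (A : Set (ℝ → ℝ))
    (hA : A = {f | ContDiff ℝ n f ∧ ∀ c : ℝ, ContDiff ℝ n fun x => f (p x + c)}) :
    A = {f | ∃ k : ℝ, f = fun _ => k} ∨
      ∃ d : ℝ, d ≠ 0 ∧ A = {f | ContDiff ℝ n f ∧ Function.Periodic f d} := by
  have hcont (f) (hf : f ∈ A) : Continuous f ∧ ∀ c, Continuous fun x => f (p x + c) := by
    rw [hA] at hf
    exact ⟨hf.1.continuous, fun c => (hf.2 c).continuous⟩
  obtain ⟨x₀, L, hL, hcluster⟩ := exists_mapClusterPt_ne_of_not_isClosed_graph hgraph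
  have hperiod : L - p x₀ ∈ commonPeriods A := fun f hf =>
    periodic_sub_of_mapClusterPt hcluster (hcont f hf).1 fun c => ((hcont f hf).2 c).continuousAt
  by_cases hconst : ∀ f ∈ A, ∃ k : ℝ, f = fun _ => k
  · refine Or.inl (Subset.antisymm hconst ?_)
    rintro _ ⟨k, rfl⟩
    exact hA ▸ ⟨contDiff_const, fun _ => contDiff_const⟩
  push Not at hconst
  obtain ⟨h, hhA, hnc⟩ := hconst
  obtain ⟨a, ha, hperiods⟩ := exists_pos_commonPeriods_eq_zmultiples (fun f hf => (hcont f hf).1)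
    (sub_ne_zero.2 hL) hperiod hhA hnc
  have : Fact (0 < a) := ⟨ha⟩
  have hP := continuous_coe_comp_of_commonPeriods_eq hcont hperiods
  have haA : a ∈ commonPeriods A := hperiods ▸ mem_zmultiples a
  have hha := haA h hhA
  refine Or.inr ⟨a, ha.ne', Subset.antisymm (fun g hg => ⟨(hA ▸ hg).1, haA g hg⟩) ?_⟩
  rintro g ⟨hg, hga⟩
  rw [hA] at hhA ⊢
  refine ⟨hg, fun c => ?_⟩
  rcases eq_or_ne n 0 with rfl | hn
  · exact contDiff_zero.2 (hga.continuous_comp_add hP hg.continuous c)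
  · exact hga.contDiff_comp_add (by exact_mod_cast hn) hP hg hha hhA.1 hhA.2 hnc c

theorem stmt_19 (n : ℕ∞) (p : ℝ → ℝ)
    (hgraph : ¬ IsClosed {q : ℝ × ℝ | q.2 = p q.1}) (hp : ¬ ContDiff ℝ n p)
    (A : Set (ℝ → ℝ))
    (hA : A = {f | ContDiff ℝ n f ∧ ∀ c : ℝ, ContDiff ℝ n fun x => f (p x + c)}) :
    A = {f | ∃ k : ℝ, f = fun _ => k} ∨
      ∃ d : ℝ, d ≠ 0 ∧ A = {f | ContDiff ℝ n f ∧ Function.Periodic f d} :=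
  stmt_19_general n p hgraph A hA
end
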